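/- arXiv:1705.10427 — 6 statements merged into one kernel-verified Lean document; each statement's English description precedes it below -/
import Mathlib

section
/- Let Σ = ⋃_{i∈I} Σ_i with I a finite index set, let Σ_{i,uc} ⊆ Σ_i for each i, and let Σ_uc = {σ ∈ Σ : for every i ∈ I, if σ ∈ Σ_i then σ ∈ Σ_{i,uc}}. For each i let M_i ⊆ Σ_i^* be a prefix-closed language and set M = ⋂_{i∈I} P_{Σ_i}^{-1}(M_i). Suppose L ⊆ M is a nonempty prefix-closed language such that (1) L = ⋂_{i∈I} P_{Σ_i}^{-1}(P_{Σ_i}(L)), and (2) for each i ∈ I, P_{Σ_i}(L)·Σ_{i,uc} ∩ M_i ⊆ P_{Σ_i}(L). Then L is controllable with respect to M and Σ_uc, that is, L·Σ_uc ∩ M ⊆ L. -/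
/-- Natural projection: delete every letter not in `A`. -/
noncomputable def natProj {α : Type*} (A : Set α) (w : List α) : List α :=
  w.filter (fun a => @decide (a ∈ A) (Classical.propDecidable _))

/-- Words all of whose letters lie in `A` (i.e. `A^*`). -/
def wordsOver {α : Type*} (A : Set α) : Set (List α) := {w | ∀ a ∈ w, a ∈ A}

/-- Inverse projection of a language `K` over the subalphabet `A`. -/
def invProj {α : Type*} (A : Set α) (K : Set (List α)) : Set (List α) :=
  {t | natProj A t ∈ K}

/-- A language is prefix-closed if every prefix of every word in it belongs to it. -/
def PrefixClosed {α : Type*} (L : Set (List α)) : Prop :=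
  ∀ u v : List α, u <+: v → v ∈ L → u ∈ L

/-- Concatenation of two languages: `A·B = {st : s ∈ A, t ∈ B}`. -/
def catL {α : Type*} (A B : Set (List α)) : Set (List α) :=
  {w | ∃ s ∈ A, ∃ t ∈ B, w = s ++ t}

/-- One-letter extension: `K·E = {sσ : s ∈ K, σ ∈ E}`. -/
def extL {α : Type*} (K : Set (List α)) (E : Set α) : Set (List α) :=
  {w | ∃ s ∈ K, ∃ σ ∈ E, w = s ++ [σ]}

/-- Quotient of languages: `L₁/L₂ = {s : ∃ t ∈ L₂, st ∈ L₁}`. -/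
def quotL {α : Type*} (L₁ L₂ : Set (List α)) : Set (List α) :=
  {s | ∃ t ∈ L₂, s ++ t ∈ L₁}

/-- Prefix closure of a language. -/
def preL {α : Type*} (K : Set (List α)) : Set (List α) :=
  {u | ∃ w ∈ K, u <+: w}

/-- `K` is controllable w.r.t. the plant language `M` and uncontrollable events `Suc`:
`pre(K)·Σ_uc ∩ M ⊆ pre(K)`. -/
def Controllable {α : Type*} (M : Set (List α)) (Suc : Set α) (K : Set (List α)) : Prop :=
  extL (preL K) Suc ∩ M ⊆ preL K

/-- The supremal controllable sublanguage of `L` w.r.t. `M` and `Suc`: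
the union of all controllable sublanguages of `L`. -/
def supC {α : Type*} (M : Set (List α)) (Suc : Set α) (L : Set (List α)) : Set (List α) :=
  ⋃₀ {K | K ⊆ L ∧ Controllable M Suc K}

theorem natProj_append_singleton_of_mem {α : Type*} {A : Set α} (s : List α) {σ : α}
    (hσ : σ ∈ A) : natProj A (s ++ [σ]) = natProj A s ++ [σ] := by
  simp [natProj, List.filter_append, hσ]

theorem natProj_append_singleton_of_notMem {α : Type*} {A : Set α} (s : List α) {σ : α}
    (hσ : σ ∉ A) : natProj A (s ++ [σ]) = natProj A s := by
  simp [natProj, List.filter_append, hσ]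

theorem extL_mono_right {α : Type*} (K : Set (List α)) {E F : Set α} (h : E ⊆ F) :
    extL K E ⊆ extL K F := by
  rintro w ⟨s, hs, σ, hσ, rfl⟩
  exact ⟨s, hs, σ, h hσ, rfl⟩

/- A letter outside `A` is invisible to `natProj A`; a letter inside `A` is locally
uncontrollable, so local controllability of `natProj A '' L` applies. -/
theorem extL_inter_invProj_subset_invProj_image {α : Type*} {A U : Set α}
    {M L : Set (List α)} (hctrl : extL (natProj A '' L) U ∩ M ⊆ natProj A '' L) :
    extL L {σ | σ ∈ A → σ ∈ U} ∩ invProj A M ⊆ invProj A (natProj A '' L) := by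
  rintro _ ⟨⟨s, hs, σ, hσ, rfl⟩, hsσM⟩
  by_cases hA : σ ∈ A
  · simp only [invProj, Set.mem_ofPred_eq] at hsσM ⊢
    rw [natProj_append_singleton_of_mem s hA] at hsσM ⊢
    exact hctrl ⟨⟨natProj A s, ⟨s, hs, rfl⟩, σ, hσ hA, rfl⟩, hsσM⟩
  · exact ⟨s, hs, (natProj_append_singleton_of_notMem s hA).symm⟩

theorem stmt_4_general {α ι : Type*} (A : ι → Set α) (U : ι → Set α) (M : ι → Set (List α))
    (L : Set (List α))
    (hsep : L = ⋂ i, invProj (A i) (natProj (A i) '' L))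
    (hctrl : ∀ i, extL (natProj (A i) '' L) (U i) ∩ M i ⊆ natProj (A i) '' L) :
    extL L {σ | ∀ i, σ ∈ A i → σ ∈ U i} ∩ (⋂ i, invProj (A i) (M i)) ⊆ L := by
  rintro w ⟨hw, hwM⟩
  rw [hsep]
  refine Set.mem_iInter.2 fun i => extL_inter_invProj_subset_invProj_image (hctrl i) ⟨?_, ?_⟩
  · exact extL_mono_right L (fun σ (hσ : ∀ j, σ ∈ A j → σ ∈ U j) => hσ i) hw
  · exact Set.mem_iInter.1 hwM i

/-- Theorem 8: a nonempty prefix-closed language that is separately controllable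
(separable, with each projection locally controllable) is globally controllable
w.r.t. the plant `M = ⋂ i, P_{Σᵢ}⁻¹(Mᵢ)` and the global uncontrollable events
`Σ_uc = {σ : ∀ i, σ ∈ Σᵢ → σ ∈ Σᵢ,uc}`. -/
theorem stmt_4 {α ι : Type*} [Fintype α] [Fintype ι]
    (A : ι → Set α) (hcov : (⋃ i, A i) = Set.univ)
    (U : ι → Set α) (hU : ∀ i, U i ⊆ A i)
    (M : ι → Set (List α)) (hMw : ∀ i, M i ⊆ wordsOver (A i))
    (hMpc : ∀ i, PrefixClosed (M i))
    (L : Set (List α)) (hne : L.Nonempty) (hpc : PrefixClosed L)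
    (hLM : L ⊆ ⋂ i, invProj (A i) (M i))
    (hsep : L = ⋂ i, invProj (A i) (natProj (A i) '' L))
    (hctrl : ∀ i, extL (natProj (A i) '' L) (U i) ∩ M i ⊆ natProj (A i) '' L) :
    extL L {σ | ∀ i, σ ∈ A i → σ ∈ U i} ∩ (⋂ i, invProj (A i) (M i)) ⊆ L :=
  stmt_4_general A U M L hsep hctrl
end

section
/- Let Σ be a finite alphabet, Σ_uc ⊆ Σ, M ⊆ Σ^* a prefix-closed language (the plant language), and L ⊆ M a prefix-closed language. Then the supremal controllable sublanguage of L with respect to M and Σ_uc is given by the explicit formula sup C(L) = L − ((M − L)/Σ_uc^*)·Σ^*, and moreover sup C(L) is prefix-closed. -/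
/-! The words of `B = (M − L)/Σ_uc^*` are those from which an uncontrollable continuation inside
`M` leaves `L`. Deleting a final uncontrollable letter keeps a word in `B`, which makes
`L − B·Σ^*` controllable. Conversely, the prefix closure of a controllable `K ⊆ L` is closed under
uncontrollable extensions inside `M`, so no prefix of a word of `K` lies in `B`. -/

section Languages

variable {α : Type*}

theorem PrefixClosed.preL_eq {K : Set (List α)} (hK : PrefixClosed K) : preL K = K :=
  Set.Subset.antisymm (fun _ ⟨_, hw, hp⟩ => hK _ _ hp hw) fun u hu => ⟨u, hu, List.prefix_refl u⟩

theorem preL_subset {K L : Set (List α)} (hL : PrefixClosed L) (hKL : K ⊆ L) : preL K ⊆ L :=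
  fun _ ⟨_, hw, hp⟩ => hL _ _ hp (hKL hw)

theorem mem_catL_univ {B : Set (List α)} {w : List α} :
    w ∈ catL B Set.univ ↔ ∃ p ∈ B, p <+: w := by
  constructor
  · rintro ⟨p, hp, t, -, rfl⟩
    exact ⟨p, hp, t, rfl⟩
  · rintro ⟨p, hp, t, rfl⟩
    exact ⟨p, hp, t, trivial, rfl⟩

theorem append_singleton_mem_catL_univ {B : Set (List α)} {w : List α} {a : α} :
    w ++ [a] ∈ catL B Set.univ ↔ w ++ [a] ∈ B ∨ w ∈ catL B Set.univ := by
  simp only [mem_catL_univ, List.prefix_concat_iff, and_or_left, exists_or, exists_eq_right]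

theorem PrefixClosed.sdiff_catL_univ {L : Set (List α)} (hL : PrefixClosed L)
    (B : Set (List α)) : PrefixClosed (L \ catL B Set.univ) := by
  rintro u v huv ⟨hvL, hvB⟩
  refine ⟨hL u v huv hvL, fun huB => hvB ?_⟩
  obtain ⟨p, hp, hpu⟩ := mem_catL_univ.1 huB
  exact mem_catL_univ.2 ⟨p, hp, hpu.trans huv⟩

theorem subset_quotL_wordsOver (A : Set (List α)) (S : Set α) : A ⊆ quotL A (wordsOver S) :=
  fun s hs => ⟨[], by simp [wordsOver], by simpa using hs⟩

theorem mem_quotL_wordsOver_of_append_singleton {A : Set (List α)} {S : Set α} {s : List α}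
    {σ : α} (hσ : σ ∈ S) (h : s ++ [σ] ∈ quotL A (wordsOver S)) : s ∈ quotL A (wordsOver S) := by
  obtain ⟨u, hu, hsu⟩ := h
  exact ⟨σ :: u, by simpa [wordsOver, hσ] using hu, by simpa using hsu⟩

theorem mem_catL_quotL_wordsOver_of_append_singleton {A : Set (List α)} {S : Set α}
    {s : List α} {σ : α} (hσ : σ ∈ S)
    (h : s ++ [σ] ∈ catL (quotL A (wordsOver S)) Set.univ) :
    s ∈ catL (quotL A (wordsOver S)) Set.univ := by
  rcases append_singleton_mem_catL_univ.1 h with hB | hs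
  · exact mem_catL_univ.2 ⟨s, mem_quotL_wordsOver_of_append_singleton hσ hB, List.prefix_refl s⟩
  · exact hs

theorem controllable_sdiff_catL_quotL {M L : Set (List α)} {S : Set α} (hL : PrefixClosed L) :
    Controllable M S (L \ catL (quotL (M \ L) (wordsOver S)) Set.univ) := by
  rw [Controllable, (hL.sdiff_catL_univ _).preL_eq]
  rintro _ ⟨⟨s, ⟨-, hsB⟩, σ, hσ, rfl⟩, hsσM⟩
  have hsσL : s ++ [σ] ∈ L := by
    by_contra hsσL
    have hsσB := subset_quotL_wordsOver (M \ L) S ⟨hsσM, hsσL⟩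
    exact hsB (mem_catL_quotL_wordsOver_of_append_singleton hσ
      (mem_catL_univ.2 ⟨_, hsσB, List.prefix_refl _⟩))
  exact ⟨hsσL, fun hsσB => hsB (mem_catL_quotL_wordsOver_of_append_singleton hσ hsσB)⟩

theorem Controllable.append_mem_preL {M K : Set (List α)} {S : Set α}
    (hK : Controllable M S K) (hM : PrefixClosed M) {s u : List α} (hs : s ∈ preL K)
    (hu : u ∈ wordsOver S) (hsu : s ++ u ∈ M) : s ++ u ∈ preL K := by
  induction u using List.reverseRecOn with
  | nil => simpa using hs
  | append_singleton u σ ih =>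
    have hσ : σ ∈ S := hu σ (by simp)
    have hsuK : s ++ u ∈ preL K :=
      ih (fun a ha => hu a (by simp [ha])) (hM _ _ ⟨[σ], by simp⟩ hsu)
    exact hK ⟨⟨s ++ u, hsuK, σ, hσ, by simp⟩, by simpa using hsu⟩

theorem Controllable.subset_sdiff_catL_quotL {M L K : Set (List α)} {S : Set α}
    (hK : Controllable M S K) (hM : PrefixClosed M) (hL : PrefixClosed L) (hKL : K ⊆ L) :
    K ⊆ L \ catL (quotL (M \ L) (wordsOver S)) Set.univ := by
  intro w hw
  refine ⟨hKL hw, fun hwB => ?_⟩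
  obtain ⟨p, ⟨u, hu, hpuM, hpuL⟩, hpw⟩ := mem_catL_univ.1 hwB
  exact hpuL (preL_subset hL hKL (hK.append_mem_preL hM ⟨w, hw, hpw⟩ hu hpuM))

theorem supC_eq_of_forall_subset {M L R : Set (List α)} {S : Set α} (hRL : R ⊆ L)
    (hR : Controllable M S R) (hmax : ∀ K ⊆ L, Controllable M S K → K ⊆ R) :
    supC M S L = R :=
  IsGreatest.csSup_eq ⟨⟨hRL, hR⟩, fun K hK => hmax K hK.1 hK.2⟩

end Languages

theorem stmt_6_general {α : Type*} (Suc : Set α) (M L : Set (List α))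
    (hM : PrefixClosed M) (hL : PrefixClosed L) :
    supC M Suc L = L \ catL (quotL (M \ L) (wordsOver Suc)) Set.univ ∧
      PrefixClosed (supC M Suc L) := by
  have hsupC : supC M Suc L = L \ catL (quotL (M \ L) (wordsOver Suc)) Set.univ :=
    supC_eq_of_forall_subset Set.sdiff_subset (controllable_sdiff_catL_quotL hL)
      fun _ hKL hK => hK.subset_sdiff_catL_quotL hM hL hKL
  exact ⟨hsupC, hsupC ▸ hL.sdiff_catL_univ _⟩

/-- Lemma 1 (prefix-closed case, equation (11)): the supremal controllable
sublanguage of a prefix-closed `L ⊆ M` is `L − ((M − L)/Σ_uc^*)·Σ^*`,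
and it is prefix-closed. -/
theorem stmt_6 {α : Type*} [Fintype α] (Suc : Set α) (M L : Set (List α))
    (hM : PrefixClosed M) (hLM : L ⊆ M) (hL : PrefixClosed L) :
    supC M Suc L = L \ catL (quotL (M \ L) (wordsOver Suc)) Set.univ ∧
      PrefixClosed (supC M Suc L) :=
  stmt_6_general Suc M L hM hL
end

section
/- Let Σ be a finite alphabet, Σ_uc ⊆ Σ, and let M, L ⊆ Σ^* be languages with L prefix-closed. Then the language R = L − ((M − L)/Σ_uc^*)·Σ^* is prefix-closed. -/
theorem catL_univ_append {α : Type*} {K : Set (List α)} {w : List α}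
    (hw : w ∈ catL K Set.univ) (r : List α) : w ++ r ∈ catL K Set.univ := by
  obtain ⟨s, hs, t, -, rfl⟩ := hw
  exact ⟨s, hs, t ++ r, trivial, List.append_assoc s t r⟩

theorem PrefixClosed.diff_catL_univ {α : Type*} {L : Set (List α)} (hL : PrefixClosed L)
    (K : Set (List α)) : PrefixClosed (L \ catL K Set.univ) := by
  rintro u v ⟨r, rfl⟩ ⟨hvL, hvK⟩
  exact ⟨hL u (u ++ r) (List.prefix_append u r) hvL, fun huK => hvK (catL_univ_append huK r)⟩

theorem stmt_7_general {α : Type*} (Suc : Set α) (M L : Set (List α))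
    (hL : PrefixClosed L) :
    PrefixClosed (L \ catL (quotL (M \ L) (wordsOver Suc)) Set.univ) :=
  hL.diff_catL_univ _

/-- If `L` is prefix-closed then `L − ((M − L)/Σ_uc^*)·Σ^*` is prefix-closed. -/
theorem stmt_7 {α : Type*} [Fintype α] (Suc : Set α) (M L : Set (List α))
    (hL : PrefixClosed L) :
    PrefixClosed (L \ catL (quotL (M \ L) (wordsOver Suc)) Set.univ) :=
  stmt_7_general Suc M L hL
end

section
/- Let Σ be a finite alphabet with subalphabets Σ_A ⊆ Σ and Σ_P ⊆ Σ. Let M ⊆ Σ^* be a language (the component), A ⊆ Σ_A^* a language (the assumption), and P ⊆ Σ_P^* a language (the property). Then the following are equivalent: (i) for every language E ⊆ Σ^*, if P_{Σ_A}(E ∩ M) ⊆ A then P_{Σ_P}(E ∩ M) ⊆ P; (ii) P_{Σ_P}(P_{Σ_A}^{-1}(A) ∩ M) ⊆ P. -/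
namespace Set

/-- `f ⁻¹' A` is the largest environment `E` with `f '' (E ∩ M) ⊆ A`, and `g '' (E ∩ M)` is
monotone in `E`. -/
theorem forall_image_inter_subset_imp_iff {β γ δ : Type*} (f : β → γ) (g : β → δ)
    (M : Set β) (A : Set γ) (P : Set δ) :
    (∀ E : Set β, f '' (E ∩ M) ⊆ A → g '' (E ∩ M) ⊆ P) ↔ g '' (f ⁻¹' A ∩ M) ⊆ P :=
  ⟨fun h => h _ (image_subset_iff.2 inter_subset_left), fun h _ hE =>
    (image_mono (subset_inter (image_subset_iff.1 hE) inter_subset_right)).trans h⟩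

end Set

theorem stmt_11_general {α : Type*} (SA SP : Set α)
    (M : Set (List α))
    (A : Set (List α))
    (P : Set (List α)) :
    (∀ E : Set (List α),
        natProj SA '' (E ∩ M) ⊆ A → natProj SP '' (E ∩ M) ⊆ P) ↔
      natProj SP '' (invProj SA A ∩ M) ⊆ P :=
  Set.forall_image_inter_subset_imp_iff (natProj SA) (natProj SP) M A P

/-- Theorem 1 (language-level form): the assume-guarantee triple `⟨A⟩M⟨P⟩`
(every environment `E` for which `E‖M` satisfies `A` makes `E‖M` satisfy `P`)
holds iff `P_{Σ_P}(P_{Σ_A}⁻¹(A) ∩ M) ⊆ P`. -/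
theorem stmt_11 {α : Type*} [Fintype α] (SA SP : Set α)
    (M : Set (List α))
    (A : Set (List α)) (hA : A ⊆ wordsOver SA)
    (P : Set (List α)) (hP : P ⊆ wordsOver SP) :
    (∀ E : Set (List α),
        natProj SA '' (E ∩ M) ⊆ A → natProj SP '' (E ∩ M) ⊆ P) ↔
      natProj SP '' (invProj SA A ∩ M) ⊆ P :=
  stmt_11_general SA SP M A P
end

section
/- Let Σ be a finite alphabet with subalphabets Σ_P ⊆ Σ_A ⊆ Σ, let I be a finite index set, and for each i ∈ I let M_i ⊆ Σ^* be a language and A_i ⊆ Σ_A^* a language, and let P ⊆ Σ_P^* be a language. Let Q : Σ_A^* → Σ_P^* denote the natural projection from words over Σ_A to words over Σ_P. Suppose (1) for each i ∈ I, P_{Σ_P}(P_{Σ_A}^{-1}(A_i) ∩ M_i) ⊆ P, and (2) Q(⋂_{i∈I}(Σ_A^* − A_i)) ⊆ P. Then P_{Σ_P}(⋂_{i∈I} M_i) ⊆ P. -/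
theorem natProj_natProj_of_subset {α : Type*} {A B : Set α} (h : B ⊆ A) (w : List α) :
    natProj B (natProj A w) = natProj B w := by
  unfold natProj
  rw [List.filter_filter]
  refine List.filter_congr fun a _ => ?_
  by_cases ha : a ∈ B
  · simp [ha, h ha]
  · simp [ha]

theorem natProj_mem_wordsOver {α : Type*} (A : Set α) (w : List α) :
    natProj A w ∈ wordsOver A := by
  intro a ha
  simp only [natProj, List.mem_filter, decide_eq_true_eq] at ha
  exact ha.2

theorem stmt_12_general {α ι : Type*}
    (SA SP : Set α) (hPA : SP ⊆ SA)
    (M : ι → Set (List α))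
    (A : ι → Set (List α))
    (P : Set (List α))
    (h1 : ∀ i, natProj SP '' (invProj SA (A i) ∩ M i) ⊆ P)
    (h2 : natProj SP '' (⋂ i, (wordsOver SA \ A i)) ⊆ P) :
    natProj SP '' (⋂ i, M i) ⊆ P := by
  rintro _ ⟨t, ht, rfl⟩
  rw [Set.mem_iInter] at ht
  by_cases hassumed : ∃ i, natProj SA t ∈ A i
  · obtain ⟨i, hi⟩ := hassumed
    exact h1 i ⟨t, ⟨hi, ht i⟩, rfl⟩
  · push Not at hassumed
    have hviolates : natProj SA t ∈ ⋂ i, (wordsOver SA \ A i) :=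
      Set.mem_iInter.mpr fun i => ⟨natProj_mem_wordsOver SA t, hassumed i⟩
    rw [← natProj_natProj_of_subset hPA]
    exact h2 ⟨_, hviolates, rfl⟩

/-- Soundness of the symmetric assume-guarantee proof rule SYM-N: if each triple
`⟨Aᵢ⟩Mᵢ⟨P⟩` holds and the projection of `⋂ i, (Σ_A^* − Aᵢ)` onto `Σ_P` is in `P`,
then the composed system `⋂ i, Mᵢ` satisfies `P`. -/
theorem stmt_12 {α ι : Type*} [Fintype α] [Fintype ι]
    (SA SP : Set α) (hPA : SP ⊆ SA)
    (M : ι → Set (List α))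
    (A : ι → Set (List α)) (hA : ∀ i, A i ⊆ wordsOver SA)
    (P : Set (List α)) (hP : P ⊆ wordsOver SP)
    (h1 : ∀ i, natProj SP '' (invProj SA (A i) ∩ M i) ⊆ P)
    (h2 : natProj SP '' (⋂ i, (wordsOver SA \ A i)) ⊆ P) :
    natProj SP '' (⋂ i, M i) ⊆ P :=
  stmt_12_general SA SP hPA M A P h1 h2
end

section
/- Let Σ be a finite alphabet with subalphabets Σ_A ⊆ Σ and Σ_P ⊆ Σ, let M ⊆ Σ^* and P ⊆ Σ_P^* be languages, and define A^w = {t ∈ Σ_A^* : P_{Σ_P}(P_{Σ_A}^{-1}(pre(t)) ∩ M) ⊆ P}, where pre(t) denotes the set of all prefixes of t. Then A^w is prefix-closed, and for every prefix-closed language A ⊆ Σ_A^*: P_{Σ_P}(P_{Σ_A}^{-1}(A) ∩ M) ⊆ P if and only if A ⊆ A^w. Consequently A^w is the weakest (largest) prefix-closed assumption over Σ_A for which the assume-guarantee triple holds. -/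
theorem invProj_mono {α : Type*} (S : Set α) : Monotone (invProj S) :=
  fun _ _ hKL _ hw => hKL hw

theorem PrefixClosed.setOf_prefix_subset {α : Type*} {L : Set (List α)} (hL : PrefixClosed L)
    {t : List α} (ht : t ∈ L) : {u | u <+: t} ⊆ L :=
  fun u hu => hL u t hu ht

theorem prefixClosed_wordsOver {α : Type*} (S : Set α) : PrefixClosed (wordsOver S) :=
  fun _ _ huv hv a ha => hv a (huv.subset ha)

theorem mem_invProj_setOf_prefix_natProj {α : Type*} (S : Set α) (w : List α) :
    w ∈ invProj S {u | u <+: natProj S w} :=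
  List.prefix_refl _

/-- A prefix-closed assumption is the union of the prefix closures of its words, so the
triple holds for it exactly when it holds for each of them. -/
theorem image_invProj_inter_subset_iff_forall_prefixes {α : Type*} {SA SP : Set α}
    {M P A : Set (List α)} (hA : PrefixClosed A) :
    natProj SP '' (invProj SA A ∩ M) ⊆ P ↔
      ∀ t ∈ A, natProj SP '' (invProj SA {u | u <+: t} ∩ M) ⊆ P := by
  constructor
  · intro h t ht
    refine (Set.image_mono ?_).trans h
    exact Set.inter_subset_inter_left M (invProj_mono SA (hA.setOf_prefix_subset ht))
  · rintro h _ ⟨w, ⟨hwA, hwM⟩, rfl⟩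
    exact h _ hwA ⟨w, ⟨mem_invProj_setOf_prefix_natProj SA w, hwM⟩, rfl⟩

theorem stmt_13_general {α : Type*} (SA SP : Set α)
    (M : Set (List α)) (P : Set (List α))
    (Aw : Set (List α))
    (hAw : Aw = {t | t ∈ wordsOver SA ∧
      natProj SP '' (invProj SA {u | u <+: t} ∩ M) ⊆ P}) :
    PrefixClosed Aw ∧
      ∀ A : Set (List α), A ⊆ wordsOver SA → PrefixClosed A →
        (natProj SP '' (invProj SA A ∩ M) ⊆ P ↔ A ⊆ Aw) := by
  subst hAw
  refine ⟨?_, fun A hAsub hA => ?_⟩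
  · rintro u v huv ⟨hvSA, hvP⟩
    refine ⟨prefixClosed_wordsOver SA u v huv hvSA, (Set.image_mono ?_).trans hvP⟩
    exact Set.inter_subset_inter_left M (invProj_mono SA fun _ hx => hx.trans huv)
  · rw [image_invProj_inter_subset_iff_forall_prefixes hA]
    exact ⟨fun h t ht => ⟨hAsub ht, h t ht⟩, fun h t ht => (h ht).2⟩

/-- Lemma 2 / Definition 9 (language-level form): the weakest assumption
`A^w = {t ∈ Σ_A^* : P_{Σ_P}(P_{Σ_A}⁻¹(pre(t)) ∩ M) ⊆ P}` is prefix-closed, and a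
prefix-closed assumption `A ⊆ Σ_A^*` makes the triple hold iff `A ⊆ A^w`. -/
theorem stmt_13 {α : Type*} [Fintype α] (SA SP : Set α)
    (M : Set (List α)) (P : Set (List α)) (hP : P ⊆ wordsOver SP)
    (Aw : Set (List α))
    (hAw : Aw = {t | t ∈ wordsOver SA ∧
      natProj SP '' (invProj SA {u | u <+: t} ∩ M) ⊆ P}) :
    PrefixClosed Aw ∧
      ∀ A : Set (List α), A ⊆ wordsOver SA → PrefixClosed A →
        (natProj SP '' (invProj SA A ∩ M) ⊆ P ↔ A ⊆ Aw) :=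
  stmt_13_general SA SP M P Aw hAw
end
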